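/- Let G be a finite multidigraph with an edge e* = (w*, v*) such that every vertex has in-degree at least 1, the vertex v* has in-degree at least 2, and G is k-out-regular for a positive integer k. Then the critical group K(G, w*) is isomorphic to the quotient of the critical group K(𝓛G, e*) of the line graph by its k-torsion subgroup. -/

import Mathlib

open Finsupp

/-- The Laplacian of a multidigraph with edge tail map `t` and head map `h`,
as a linear endomorphism of the free abelian group on the vertices. -/
noncomputable def lap {V E : Type*} [Fintype E] [DecidableEq V] (t h : E → V) :
    (V →₀ ℤ) →ₗ[ℤ] (V →₀ ℤ) :=
  Finsupp.lift (V →₀ ℤ) ℤ V fun v =>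
    ∑ e : E, if t e = v then Finsupp.single (h e) (1 : ℤ) - Finsupp.single v 1 else 0

/-- The modified Laplacian `φ_{G,w}` : sends `v ↦ Δ_G v` for `v ≠ w`, and `w ↦ w`. -/
noncomputable def phiMod {V E : Type*} [Fintype E] [DecidableEq V] (t h : E → V) (w : V) :
    (V →₀ ℤ) →ₗ[ℤ] (V →₀ ℤ) :=
  Finsupp.lift (V →₀ ℤ) ℤ V fun v =>
    if v = w then Finsupp.single w 1 else lap t h (Finsupp.single v 1)

/-- Edges of the directed line graph: pairs `(e, f)` with `e⁺ = f⁻`. -/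
def LineEdge {V E : Type*} (t h : E → V) : Type _ := {p : E × E // h p.1 = t p.2}

instance {V E : Type*} [Fintype E] [DecidableEq V] (t h : E → V) :
    Fintype (LineEdge t h) := by
  unfold LineEdge; infer_instance

/-- in-degree of a vertex -/
def indeg {V E : Type*} [Fintype E] [DecidableEq V] (h : E → V) (v : V) : ℕ :=
  (Finset.univ.filter fun e => h e = v).card

/-- out-degree of a vertex -/
def outdeg {V E : Type*} [Fintype E] [DecidableEq V] (t : E → V) (v : V) : ℕ :=
  (Finset.univ.filter fun e => t e = v).card

/-- The modified target map `τ`: `e ↦ e⁺` for `e ≠ e*`, `e* ↦ 0`. -/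
noncomputable def tau {V E : Type*} [DecidableEq E] (h : E → V) (estar : E) :
    (E →₀ ℤ) →ₗ[ℤ] (V →₀ ℤ) :=
  Finsupp.lift (V →₀ ℤ) ℤ E fun e =>
    if e = estar then 0 else Finsupp.single (h e) 1

/-- The map `ρ`: `e ↦ Δ_G(w*) − v* − w* + e⁺` for `e ≠ e*`, `e* ↦ 0`,
where `w* = t e*` and `v* = h e*`. -/
noncomputable def rho {V E : Type*} [Fintype E] [DecidableEq V] [DecidableEq E]
    (t h : E → V) (estar : E) : (E →₀ ℤ) →ₗ[ℤ] (V →₀ ℤ) :=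
  Finsupp.lift (V →₀ ℤ) ℤ E fun e =>
    if e = estar then 0 else
      lap t h (Finsupp.single (t estar) 1) - Finsupp.single (h estar) 1
        - Finsupp.single (t estar) 1 + Finsupp.single (h e) 1

/-- The map `ρ₀`: `v ↦ Δ_G(w*) − v* − w* + v`. -/
noncomputable def rho0 {V E : Type*} [Fintype E] [DecidableEq V] (t h : E → V) (estar : E) :
    (V →₀ ℤ) →ₗ[ℤ] (V →₀ ℤ) :=
  Finsupp.lift (V →₀ ℤ) ℤ V fun v =>
    lap t h (Finsupp.single (t estar) 1) - Finsupp.single (h estar) 1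
      - Finsupp.single (t estar) 1 + Finsupp.single v 1

/-- The map `ψ`: `v ↦ Δ_G v` for `v ≠ w*`, and `w* ↦ Δ_G(w*) − v*`. -/
noncomputable def psi {V E : Type*} [Fintype E] [DecidableEq V] (t h : E → V) (estar : E) :
    (V →₀ ℤ) →ₗ[ℤ] (V →₀ ℤ) :=
  Finsupp.lift (V →₀ ℤ) ℤ V fun v =>
    if v = t estar then
      lap t h (Finsupp.single (t estar) 1) - Finsupp.single (h estar) 1
    else lap t h (Finsupp.single v 1)

/-- The map `σ`: `v ↦ Σ_{e⁻ = v} e`. -/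
noncomputable def sigmaMap {V E : Type*} [Fintype E] [DecidableEq V] (t : E → V) :
    (V →₀ ℤ) →ₗ[ℤ] (E →₀ ℤ) :=
  Finsupp.lift (E →₀ ℤ) ℤ V fun v =>
    ∑ e : E, if t e = v then Finsupp.single e (1 : ℤ) else 0

/-!
Let `τ : ℤE → ℤV` send `e ↦ e⁺` and `e* ↦ 0`, let `σ : ℤV → ℤE` send `v` to the sum of its
out-edges, and let `ψ` be `Δ_G` with `Δ_G w*` replaced by `Δ_G w* − v*`. For a `k`-out-regular
`G` one has `τ ∘ σ = ψ + k` and `φ_{𝓛G,e*} z = σ (τ z) − k z + (k + 1) z(e*) e*`. Hence `στ ≡ k`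
modulo `im φ_{𝓛G,e*}`, `σ` maps `im ψ` into `im φ_{𝓛G,e*}`, and conversely `σ y ∈ im φ_{𝓛G,e*}`
forces `y ∈ im ψ`: writing `σ y = φ_{𝓛G,e*} z`, the vector `τ z − y` is divisible by `k` because
every vertex has an out-edge. Together: `τ x ∈ im ψ ↔ k x ∈ im φ_{𝓛G,e*}`, so `τ` induces a map
`K(𝓛G, e*) → ℤV ⧸ im ψ` whose kernel is the `k`-torsion; it is onto because every vertex has an
in-edge other than `e*`. Finally the involution `ρ₀` carries `im ψ` onto `im φ_{G,w*}`.
-/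

noncomputable def Submodule.quotTorsionByEquivOfSurjective {R M M' : Type*} [CommRing R]
    [AddCommGroup M] [Module R M] [AddCommGroup M'] [Module R M'] {N : Submodule R M}
    {P : Submodule R M'} {f : M →ₗ[R] M'} (hf : Function.Surjective f) {r : R}
    (H : ∀ x, f x ∈ P ↔ r • x ∈ N) :
    ((M ⧸ N) ⧸ torsionBy R (M ⧸ N) r) ≃ₗ[R] M' ⧸ P :=
  let g := N.mapQ P f fun x hx => (H x).2 (N.smul_mem r hx)
  have hg : Function.Surjective g := by
    intro y
    obtain ⟨y, rfl⟩ := P.mkQ_surjective y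
    obtain ⟨x, rfl⟩ := hf y
    exact ⟨N.mkQ x, rfl⟩
  have hker : LinearMap.ker g = torsionBy R (M ⧸ N) r := by
    ext x
    obtain ⟨x, rfl⟩ := N.mkQ_surjective x
    rw [LinearMap.mem_ker, mem_torsionBy_iff, ← map_smul]
    simp only [g, mkQ_apply, mapQ_apply, Quotient.mk_eq_zero]
    exact H x
  (quotEquivOfEq _ _ hker.symm).trans (g.quotKerEquivOfSurjective hg)

theorem Finsupp.exists_smul_eq_of_forall_dvd {α : Type*} {k : ℤ} {u : α →₀ ℤ}
    (hu : ∀ a, k ∣ u a) : ∃ u' : α →₀ ℤ, k • u' = u :=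
  ⟨u.mapRange (· / k) (Int.zero_ediv k), by ext a; simp [Int.mul_ediv_cancel' (hu a)]⟩

noncomputable def coeffSum (α : Type*) : (α →₀ ℤ) →ₗ[ℤ] ℤ :=
  linearCombination ℤ fun _ => 1

@[simp]
theorem coeffSum_single {α : Type*} (a : α) (n : ℤ) : coeffSum α (single a n) = n := by
  simp [coeffSum]

section Digraph

variable {V E : Type*}

theorem lap_single [Fintype E] [DecidableEq V] (t h : E → V) (v : V) :
    lap t h (single v 1)
      = ∑ e : E, if t e = v then single (h e) (1 : ℤ) - single v 1 else 0 := by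
  simp [lap]

theorem sigmaMap_single [Fintype E] [DecidableEq V] (t : E → V) (v : V) :
    sigmaMap t (single v 1) = ∑ e : E, if t e = v then single e (1 : ℤ) else 0 := by
  simp [sigmaMap]

theorem sigmaMap_apply [Fintype E] [DecidableEq V] (t : E → V) (y : V →₀ ℤ) (f : E) :
    sigmaMap t y f = y (t f) := by
  suffices (lapply f).comp (sigmaMap t) = lapply (t f) from LinearMap.congr_fun this y
  refine lhom_ext' fun v => LinearMap.ext_ring ?_
  classical
  simp only [LinearMap.comp_apply, lsingle_apply, lapply_apply, sigmaMap_single,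
    finsetSum_apply, apply_ite (fun x : E →₀ ℤ => x f), single_apply, coe_zero, Pi.zero_apply]
  rw [Finset.sum_eq_single f] <;> aesop

theorem coeffSum_sigmaMap [Fintype E] [DecidableEq V] {t : E → V} {k : ℕ}
    (hreg : ∀ v, outdeg t v = k) (y : V →₀ ℤ) :
    coeffSum E (sigmaMap t y) = k * coeffSum V y := by
  suffices (coeffSum E).comp (sigmaMap t) = (k : ℤ) • coeffSum V from LinearMap.congr_fun this y
  refine lhom_ext' fun v => LinearMap.ext_ring ?_
  simp [sigmaMap_single, apply_ite (coeffSum E), ← hreg v, outdeg]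

theorem coeffSum_lap [Fintype E] [DecidableEq V] (t h : E → V) (x : V →₀ ℤ) :
    coeffSum V (lap t h x) = 0 := by
  suffices (coeffSum V).comp (lap t h) = 0 from LinearMap.congr_fun this x
  refine lhom_ext' fun v => LinearMap.ext_ring ?_
  simp [lap_single, apply_ite (coeffSum V)]

theorem lap_apply_of_outdeg_eq [Fintype E] [DecidableEq V] {t : E → V} {k : ℕ} (h : E → V)
    (hreg : ∀ v, outdeg t v = k) (y : V →₀ ℤ) :
    lap t h y = mapDomain h (sigmaMap t y) - (k : ℤ) • y := by
  suffices lap t h = lmapDomain ℤ ℤ h ∘ₗ sigmaMap t - (k : ℤ) • LinearMap.id from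
    LinearMap.congr_fun this y
  ext v : 2
  simp only [LinearMap.comp_apply, lsingle_apply, LinearMap.sub_apply, LinearMap.smul_apply,
    LinearMap.id_apply, lap_single, sigmaMap_single, lmapDomain_apply, map_sum,
    apply_ite (mapDomain h), mapDomain_single, mapDomain_zero]
  rw [← Finset.sum_filter, ← Finset.sum_filter, Finset.sum_sub_distrib, Finset.sum_const, ← hreg v]
  rfl

theorem phiMod_apply [Fintype E] [DecidableEq V] (t h : E → V) (w : V) (x : V →₀ ℤ) :
    phiMod t h w x = lap t h x + x w • (single w 1 - lap t h (single w 1)) := by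
  suffices phiMod t h w = lap t h + (lapply w).smulRight (single w 1 - lap t h (single w 1)) from
    LinearMap.congr_fun this x
  ext v : 2
  by_cases hv : v = w <;> simp [phiMod, hv, Ne.symm]

theorem coeffSum_phiMod [Fintype E] [DecidableEq V] (t h : E → V) (w : V) (x : V →₀ ℤ) :
    coeffSum V (phiMod t h w x) = x w := by
  simp [phiMod_apply, coeffSum_lap]

theorem psi_apply [Fintype E] [DecidableEq V] (t h : E → V) (estar : E) (y : V →₀ ℤ) :
    psi t h estar y = lap t h y - y (t estar) • single (h estar) 1 := by
  suffices psi t h estar = lap t h - (lapply (t estar)).smulRight (single (h estar) 1) from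
    LinearMap.congr_fun this y
  ext v : 2
  by_cases hv : v = t estar <;> simp [psi, hv, Ne.symm]

theorem tau_apply [DecidableEq E] (h : E → V) (estar : E) (x : E →₀ ℤ) :
    tau h estar x = mapDomain h x - x estar • single (h estar) 1 := by
  suffices tau h estar = lmapDomain ℤ ℤ h - (lapply estar).smulRight (single (h estar) 1) from
    LinearMap.congr_fun this x
  ext e : 2
  by_cases he : e = estar <;> simp [tau, he]

theorem tau_surjective [Fintype E] [DecidableEq V] [DecidableEq E] {h : E → V} (estar : E)
    (hin : ∀ v : V, 1 ≤ indeg h v) (hv : 2 ≤ indeg h (h estar)) :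
    Function.Surjective (tau h estar) := by
  have hpre : ∀ v, ∃ e, e ≠ estar ∧ h e = v := by
    intro v
    by_cases hve : v = h estar
    · subst hve
      obtain ⟨e, he, hne⟩ := Finset.exists_mem_ne hv estar
      exact ⟨e, hne, (Finset.mem_filter.1 he).2⟩
    · obtain ⟨e, he⟩ := Finset.card_pos.1 (hin v)
      have he' := (Finset.mem_filter.1 he).2
      exact ⟨e, by rintro rfl; exact hve he'.symm, he'⟩
  choose pre hpre_ne hpre_eq using hpre
  intro y
  refine ⟨mapDomain pre y, ?_⟩
  rw [tau_apply, ← mapDomain_comp, show h ∘ pre = id from funext hpre_eq, mapDomain_id,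
    mapDomain_of_notMem_range _ _ fun ⟨v, hv⟩ => hpre_ne v hv, zero_smul, sub_zero]

section Rho

variable [Fintype E] [DecidableEq V] (t h : E → V) (estar : E)

theorem rho0_apply (x : V →₀ ℤ) :
    rho0 t h estar x = x + coeffSum V x •
      (lap t h (single (t estar) 1) - single (h estar) 1 - single (t estar) 1) := by
  suffices rho0 t h estar = LinearMap.id + (coeffSum V).smulRight
      (lap t h (single (t estar) 1) - single (h estar) 1 - single (t estar) 1) from
    LinearMap.congr_fun this x
  ext v : 2
  simp [rho0]
  abel

theorem rho0_rho0 (x : V →₀ ℤ) : rho0 t h estar (rho0 t h estar x) = x := by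
  have hsum : coeffSum V
      (lap t h (single (t estar) 1) - single (h estar) 1 - single (t estar) 1) = -2 := by
    simp [coeffSum_lap]
  rw [rho0_apply, rho0_apply, map_add, map_smul, hsum, smul_eq_mul]
  module

theorem rho0_psi (y : V →₀ ℤ) : rho0 t h estar (psi t h estar y) = phiMod t h (t estar) y := by
  rw [rho0_apply, psi_apply, phiMod_apply, map_sub, map_smul, coeffSum_lap, coeffSum_single,
    smul_eq_mul, mul_one, zero_sub]
  module

noncomputable def rho0Equiv : (V →₀ ℤ) ≃ₗ[ℤ] (V →₀ ℤ) :=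
  LinearEquiv.ofInvolutive (rho0 t h estar) (rho0_rho0 t h estar)

theorem map_range_psi_rho0Equiv :
    (LinearMap.range (psi t h estar)).map (rho0Equiv t h estar : (V →₀ ℤ) →ₗ[ℤ] (V →₀ ℤ))
      = LinearMap.range (phiMod t h (t estar)) := by
  rw [← LinearMap.range_comp]
  exact congrArg LinearMap.range (LinearMap.ext (rho0_psi t h estar))

end Rho

end Digraph

section LineGraph

variable {V E : Type*} [Fintype E] [DecidableEq V] [DecidableEq E]

abbrev lineTail (t h : E → V) : LineEdge t h → E := fun p => p.1.1

abbrev lineHead (t h : E → V) : LineEdge t h → E := fun p => p.1.2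

theorem sum_lineEdge_ite_tail_eq {M : Type*} [AddCommMonoid M] (t h : E → V) (e : E)
    (g : E → M) :
    (∑ p : LineEdge t h, if lineTail t h p = e then g (lineHead t h p) else 0)
      = ∑ f : E, if t f = h e then g f else 0 := by
  rw [← Finset.sum_filter, ← Finset.sum_filter]
  refine Finset.sum_bij' (fun p _ => p.1.2)
    (fun f hf => (⟨(e, f), (Finset.mem_filter.1 hf).2.symm⟩ : LineEdge t h))
    ?_ (fun _ _ => Finset.mem_filter.2 ⟨Finset.mem_univ _, rfl⟩) ?_ (fun _ _ => rfl)
    (fun _ _ => rfl)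
  · rintro ⟨⟨a, b⟩, hab⟩ hp
    obtain rfl : a = e := (Finset.mem_filter.1 hp).2
    exact Finset.mem_filter.2 ⟨Finset.mem_univ _, hab.symm⟩
  · rintro ⟨⟨a, b⟩, hab⟩ hp
    obtain rfl : a = e := (Finset.mem_filter.1 hp).2
    rfl

theorem lap_line_single (t h : E → V) (e : E) :
    lap (lineTail t h) (lineHead t h) (single e 1)
      = sigmaMap t (single (h e) 1) - (outdeg t (h e) : ℤ) • single e 1 := by
  have := sum_lineEdge_ite_tail_eq t h e fun f => single f (1 : ℤ) - single e 1
  simp only [lap, lift_apply, sum_single_index, one_smul, zero_smul]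
  rw [this, sigmaMap_single, ← Finset.sum_filter, Finset.sum_sub_distrib, Finset.sum_const,
    Finset.sum_filter]
  rfl

variable {t h : E → V} {k : ℕ} (estar : E)

theorem lap_line_apply_of_outdeg_eq (hreg : ∀ v, outdeg t v = k) (z : E →₀ ℤ) :
    lap (lineTail t h) (lineHead t h) z = sigmaMap t (mapDomain h z) - (k : ℤ) • z := by
  suffices lap (lineTail t h) (lineHead t h) = sigmaMap t ∘ₗ lmapDomain ℤ ℤ h
      - (k : ℤ) • LinearMap.id from LinearMap.congr_fun this z
  ext e : 2
  simp [lap_line_single, hreg]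

theorem tau_sigmaMap (hreg : ∀ v, outdeg t v = k) (y : V →₀ ℤ) :
    tau h estar (sigmaMap t y) = psi t h estar y + (k : ℤ) • y := by
  rw [tau_apply, psi_apply, lap_apply_of_outdeg_eq h hreg, sigmaMap_apply]
  abel

theorem phiMod_line_apply (hreg : ∀ v, outdeg t v = k) (z : E →₀ ℤ) :
    phiMod (lineTail t h) (lineHead t h) estar z
      = sigmaMap t (tau h estar z) - (k : ℤ) • z + ((k + 1) * z estar) • single estar 1 := by
  rw [phiMod_apply, lap_line_apply_of_outdeg_eq hreg, lap_line_apply_of_outdeg_eq hreg, tau_apply,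
    map_sub, map_smul, mapDomain_single]
  module

theorem sigmaMap_tau_sub_smul_mem_range (hreg : ∀ v, outdeg t v = k) (x : E →₀ ℤ) :
    sigmaMap t (tau h estar x) - (k : ℤ) • x
      ∈ LinearMap.range (phiMod (lineTail t h) (lineHead t h) estar) := by
  refine ⟨x - ((k + 1) * x estar) • single estar 1, ?_⟩
  rw [map_sub, map_smul, phiMod_line_apply estar hreg]
  simp only [phiMod, lift_apply, sum_single_index, ite_true, one_smul, zero_smul]
  abel

theorem mem_range_psi_of_sigmaMap_mem_range (hk : 0 < k) (hreg : ∀ v, outdeg t v = k)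
    {y : V →₀ ℤ}
    (hy : sigmaMap t y ∈ LinearMap.range (phiMod (lineTail t h) (lineHead t h) estar)) :
    y ∈ LinearMap.range (psi t h estar) := by
  obtain ⟨z, hz⟩ := hy
  set u := tau h estar z - y
  have hc : z estar = k * coeffSum V y := by
    rw [← coeffSum_phiMod (lineTail t h) (lineHead t h) estar z, hz, coeffSum_sigmaMap hreg]
  have hkz : (k : ℤ) • z = sigmaMap t u + ((k + 1) * z estar) • single estar 1 := by
    rw [phiMod_line_apply estar hreg] at hz
    rw [map_sub, ← hz]
    abel
  have hdvd : ∀ v, (k : ℤ) ∣ u v := by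
    intro v
    obtain ⟨f, hf⟩ := Finset.card_pos.1 (hreg v ▸ hk : 0 < outdeg t v)
    have hkzf := DFunLike.congr_fun hkz f
    simp only [coe_smul, coe_add, Pi.smul_apply, Pi.add_apply, sigmaMap_apply,
      (Finset.mem_filter.1 hf).2, hc, single_apply, smul_eq_mul] at hkzf
    exact ⟨z f - (k + 1) * coeffSum V y * if estar = f then 1 else 0, by linear_combination -hkzf⟩
  obtain ⟨u', hu'⟩ := exists_smul_eq_of_forall_dvd hdvd
  have hτ := congrArg (tau h estar) hkz
  rw [map_add, map_smul, map_smul, tau_sigmaMap estar hreg,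
    show tau h estar (single estar 1) = 0 by simp [tau], smul_zero, add_zero] at hτ
  refine ⟨u', smul_right_injective (V →₀ ℤ) (Int.natCast_ne_zero.2 hk.ne') ?_⟩
  calc (k : ℤ) • psi t h estar u' = psi t h estar u := by rw [← hu', map_smul]
    _ = (k : ℤ) • (tau h estar z - u) := by rw [smul_sub, hτ]; abel
    _ = (k : ℤ) • y := by rw [sub_sub_cancel]

theorem tau_mem_range_psi_iff (hk : 0 < k) (hreg : ∀ v, outdeg t v = k) (x : E →₀ ℤ) :
    tau h estar x ∈ LinearMap.range (psi t h estar)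
      ↔ (k : ℤ) • x ∈ LinearMap.range (phiMod (lineTail t h) (lineHead t h) estar) := by
  have hx := sigmaMap_tau_sub_smul_mem_range (h := h) estar hreg x
  constructor
  · rintro ⟨y, hy⟩
    have hy' := sigmaMap_tau_sub_smul_mem_range (h := h) estar hreg (sigmaMap t y)
    rw [tau_sigmaMap estar hreg, map_add, map_smul, add_sub_cancel_right, hy] at hy'
    simpa using sub_mem hy' hx
  · intro hkx
    exact mem_range_psi_of_sigmaMap_mem_range estar hk hreg (by simpa using add_mem hx hkx)

end LineGraph

theorem critical_group_iso_line_graph_mod_torsion_general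
    {V E : Type*} [Fintype E] [DecidableEq V] [DecidableEq E]
    (t h : E → V) (estar : E) (k : ℕ) (hk : 0 < k)
    (hreg : ∀ v : V, outdeg t v = k)
    (hin : ∀ v : V, 1 ≤ indeg h v) (hv : 2 ≤ indeg h (h estar)) :
    Nonempty (
      (((E →₀ ℤ) ⧸ LinearMap.range
          (phiMod (fun p : LineEdge t h => p.1.1) (fun p : LineEdge t h => p.1.2) estar)) ⧸
        Submodule.torsionBy ℤ ((E →₀ ℤ) ⧸ LinearMap.range
          (phiMod (fun p : LineEdge t h => p.1.1) (fun p : LineEdge t h => p.1.2) estar)) (k : ℤ))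
      ≃ₗ[ℤ] ((V →₀ ℤ) ⧸ LinearMap.range (phiMod t h (t estar)))) :=
  ⟨(Submodule.quotTorsionByEquivOfSurjective (tau_surjective estar hin hv)
      (tau_mem_range_psi_iff estar hk hreg)).trans
    (Submodule.Quotient.equiv _ _ (rho0Equiv t h estar) (map_range_psi_rho0Equiv t h estar))⟩

/-- `K(G, w*)` is isomorphic to the quotient of `K(𝓛G, e*)` by its
`k`-torsion subgroup. -/
theorem critical_group_iso_line_graph_mod_torsion
    {V E : Type*} [Fintype V] [Fintype E] [DecidableEq V] [DecidableEq E]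
    (t h : E → V) (estar : E) (k : ℕ) (hk : 0 < k)
    (hreg : ∀ v : V, outdeg t v = k)
    (hin : ∀ v : V, 1 ≤ indeg h v) (hv : 2 ≤ indeg h (h estar)) :
    Nonempty (
      (((E →₀ ℤ) ⧸ LinearMap.range
          (phiMod (fun p : LineEdge t h => p.1.1) (fun p : LineEdge t h => p.1.2) estar)) ⧸
        Submodule.torsionBy ℤ ((E →₀ ℤ) ⧸ LinearMap.range
          (phiMod (fun p : LineEdge t h => p.1.1) (fun p : LineEdge t h => p.1.2) estar)) (k : ℤ))
      ≃ₗ[ℤ] ((V →₀ ℤ) ⧸ LinearMap.range (phiMod t h (t estar)))) :=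
  critical_group_iso_line_graph_mod_torsion_general t h estar k hk hreg hin hv
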